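/- Let G be a finite abelian group, χ : G →* ℂˣ a character, and n ≥ 1. Then the monomial representation V_χ of G ≀ Sₙ on ℂⁿ is isomorphic, as a representation of G ≀ Sₙ, to the induced representation Ind_{G × (G ≀ S_{n−1})}^{G ≀ Sₙ}(χ ⊠ 1), where G × (G ≀ S_{n−1}) is embedded in G ≀ Sₙ as the subgroup of pairs (f, σ) with σ fixing the first coordinate (via a bijection Fin 1 ⊕ Fin (n−1) ≃ Fin n), and χ ⊠ 1 is the one-dimensional character sending such a pair to χ(f 0). -/

import Mathlib

open scoped TensorProduct

noncomputable section

/-- The permutation action of `Sₙ` on `Fin n → G`, as automorphisms. -/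
def permMulAut (G : Type) [Group G] (n : ℕ) : Equiv.Perm (Fin n) →* MulAut (Fin n → G) where
  toFun σ :=
    { toFun := fun f i => f (σ⁻¹ i)
      invFun := fun f i => f (σ i)
      left_inv := fun f => funext fun i => by simp
      right_inv := fun f => funext fun i => by simp
      map_mul' := fun f g => rfl }
  map_one' := by ext f i; simp
  map_mul' := fun σ τ => by ext f i; simp [mul_inv_rev]

/-- The wreath product `G ≀ Sₙ = Gⁿ ⋊ Sₙ`. -/
abbrev Wreath (G : Type) [Group G] (n : ℕ) : Type :=
  (Fin n → G) ⋊[permMulAut G n] Equiv.Perm (Fin n)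

/-- The character of a representation. -/
def repChar {H V : Type} [Monoid H] [AddCommGroup V] [Module ℂ V]
    (ρ : Representation ℂ H V) : H → ℂ :=
  fun h => LinearMap.trace ℂ V (ρ h)

/-- The monomial representation `V_χ` of `G ≀ Sₙ` on `ℂⁿ` attached to a one-dimensional
character `χ` of `G`: `((f, σ) • v) i = χ (f i) • v (σ⁻¹ i)`. -/
def monomialRep {G : Type} [Group G] (n : ℕ) (χ : G →* ℂˣ) :
    Representation ℂ (Wreath G n) (Fin n → ℂ) where
  toFun w :=
    { toFun := fun v i => (χ (w.left i) : ℂ) • v (w.right⁻¹ i)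
      map_add' := fun v₁ v₂ => by funext i; simp [mul_add]
      map_smul' := fun c v => by funext i; simp [smul_eq_mul]; ring }
  map_one' := by ext v i; simp
  map_mul' w₁ w₂ := by
    ext v i
    simp [permMulAut, mul_inv_rev, smul_eq_mul, Equiv.Perm.mul_def, mul_assoc,
      Equiv.Perm.inv_def, Equiv.symm_trans_apply]

/-- The identification `Fin k ⊕ Fin (n - k) ≃ Fin n` for `k ≤ n`. -/
def finSumEquiv {k n : ℕ} (hk : k ≤ n) : Fin k ⊕ Fin (n - k) ≃ Fin n :=
  finSumFinEquiv.trans (finCongr (Nat.add_sub_cancel' hk))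

def pairHom (G : Type) [Group G] {k n : ℕ} (hk : k ≤ n) :
    Wreath G k × Wreath G (n - k) →* Wreath G n where
  toFun p :=
    ⟨fun i => Sum.elim p.1.left p.2.left ((finSumEquiv hk).symm i),
     (finSumEquiv hk).permCongr (Equiv.sumCongr p.1.right p.2.right)⟩
  map_one' := by
    ext i
    · simp [Equiv.permCongr]
    · simp [Equiv.permCongr]
  map_mul' p q := by
    ext i
    · show Sum.elim _ _ _ = _ * (permMulAut G n _ _) i
      simp only [SemidirectProduct.mul_left, Prod.fst_mul, Prod.snd_mul, Pi.mul_apply,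
        permMulAut, MonoidHom.coe_mk, OneHom.coe_mk, Equiv.coe_fn_mk,
        Equiv.permCongr_apply, Equiv.permCongr, Equiv.equivCongr, Equiv.coe_fn_symm_mk]
      rcases h : (finSumEquiv hk).symm i with j | j <;>
        simp [h, Equiv.Perm.inv_def, Equiv.sumCongr_symm, Equiv.sumCongr_apply,
          -SemidirectProduct.mk_eq_inl_mul_inr]
    · simp only [SemidirectProduct.mul_right, Prod.fst_mul, Prod.snd_mul,
        Equiv.permCongr_apply, Equiv.Perm.mul_apply, Equiv.sumCongr_apply, Equiv.symm_apply_apply]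
      rcases (finSumEquiv hk).symm i with j | j <;> simp

section Induced

variable {K H M : Type} [Group K] [Group H] [AddCommGroup M] [Module ℂ M]

/-- The relations defining `ℂ[H] ⊗_{ℂ[K]} M` as a quotient of `ℂ[H] ⊗_ℂ M`,
where `ℂ[H]` is a right `ℂ[K]`-module via `ι : K →* H`. -/
def indRelations (ι : K →* H) (ρ : Representation ℂ K M) :
    Submodule ℂ (MonoidAlgebra ℂ H ⊗[ℂ] M) :=
  Submodule.span ℂ {x | ∃ (a : MonoidAlgebra ℂ H) (kk : K) (m : M),
    x = (a * MonoidAlgebra.single (ι kk) 1) ⊗ₜ[ℂ] m - a ⊗ₜ[ℂ] (ρ kk m)}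

/-- The carrier `ℂ[H] ⊗_{ℂ[K]} M` of the induced representation. -/
abbrev IndV (ι : K →* H) (ρ : Representation ℂ K M) : Type :=
  (MonoidAlgebra ℂ H ⊗[ℂ] M) ⧸ indRelations ι ρ

lemma indRelations_le_comap (ι : K →* H) (ρ : Representation ℂ K M) (h : H) :
    indRelations ι ρ ≤ (indRelations ι ρ).comap
      (TensorProduct.map (LinearMap.mulLeft ℂ (MonoidAlgebra.single h (1:ℂ))) LinearMap.id) := by
  refine Submodule.span_le.2 ?_
  rintro x ⟨a, kk, m, rfl⟩
  simp only [SetLike.mem_coe, Submodule.mem_comap, map_sub, TensorProduct.map_tmul,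
    LinearMap.mulLeft_apply, LinearMap.id_apply]
  exact Submodule.subset_span
    ⟨MonoidAlgebra.single h 1 * a, kk, m, by rw [mul_assoc]⟩

/-- The induced representation `Ind_K^H M = ℂ[H] ⊗_{ℂ[K]} M`, for a representation of `K`
viewed inside `H` via `ι : K →* H`, with `H` acting by left multiplication on `ℂ[H]`. -/
def indRep (ι : K →* H) (ρ : Representation ℂ K M) : Representation ℂ H (IndV ι ρ) where
  toFun h := Submodule.mapQ _ _
    (TensorProduct.map (LinearMap.mulLeft ℂ (MonoidAlgebra.single h (1:ℂ))) LinearMap.id)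
    (indRelations_le_comap ι ρ h)
  map_one' := by
    refine Submodule.linearMap_qext _ ?_
    ext x
    simp [MonoidAlgebra.one_def]
  map_mul' h₁ h₂ := by
    refine Submodule.linearMap_qext _ ?_
    ext x
    simp [MonoidAlgebra.single_mul_single, mul_assoc]


end Induced
/-- The embedding of `G` into `G ≀ S₁`. -/
def gHom (G : Type) [Group G] : G →* Wreath G 1 where
  toFun g := ⟨fun _ => g, 1⟩
  map_one' := rfl
  map_mul' g h := by
    ext i
    · exact rfl
    · simp

/-- The one-dimensional representation `χ ⊠ 1` of `G × (G ≀ S_{n-1})`, sending `(g, w)`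
to `χ g`. -/
def chiBoxOne {G : Type} [Group G] (n : ℕ) (χ : G →* ℂˣ) :
    Representation ℂ (G × Wreath G (n - 1)) ℂ where
  toFun p := ((χ p.1 : ℂ)) • LinearMap.id
  map_one' := by ext; simp
  map_mul' p q := by ext; simp [smul_eq_mul]; ring


/-!
The vector `e_{i₀}` of the first coordinate spans a line on which the stabiliser
`G × (G ≀ Sₙ₋₁)` of `i₀` acts through `χ ⊠ 1`, so Frobenius reciprocity gives an equivariant
map `Ind (χ ⊠ 1) → ℂⁿ`, `a ⊗ 1 ↦ a • e_{i₀}`. The elements `(1, swap i₀ i)` represent the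
cosets of the stabiliser, so their classes span the induced module, and they are sent to the
standard basis `eᵢ`: the map is an isomorphism.
-/

section InducedLift

open MonoidAlgebra

variable {K H M V : Type} [Group K] [Group H] [AddCommGroup M] [Module ℂ M]
  [AddCommGroup V] [Module ℂ V] {ι : K →* H} {ρ : Representation ℂ K M}

lemma indRep_mk_tmul (h : H) (a : MonoidAlgebra ℂ H) (m : M) :
    indRep ι ρ h (Submodule.Quotient.mk (a ⊗ₜ m)) =
      Submodule.Quotient.mk ((single h 1 * a) ⊗ₜ m) :=
  rfl

lemma mk_mul_single_tmul (a : MonoidAlgebra ℂ H) (k : K) (m : M) :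
    (Submodule.Quotient.mk ((a * single (ι k) 1) ⊗ₜ m) : IndV ι ρ) =
      Submodule.Quotient.mk (a ⊗ₜ ρ k m) :=
  (Submodule.Quotient.eq _).2 (Submodule.subset_span ⟨a, k, m, rfl⟩)

def indLift (σ : Representation ℂ H V) (f : M →ₗ[ℂ] V)
    (hf : ∀ k m, f (ρ k m) = σ (ι k) (f m)) : IndV ι ρ →ₗ[ℂ] V :=
  Submodule.liftQ _ (TensorProduct.lift (LinearMap.lcomp ℂ V f ∘ₗ σ.asAlgebraHom.toLinearMap)) <| by
    refine Submodule.span_le.2 ?_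
    rintro _ ⟨a, k, m, rfl⟩
    simp [hf]

variable {σ : Representation ℂ H V} {f : M →ₗ[ℂ] V} {hf : ∀ k m, f (ρ k m) = σ (ι k) (f m)}

lemma indLift_mk_tmul (a : MonoidAlgebra ℂ H) (m : M) :
    indLift σ f hf (Submodule.Quotient.mk (a ⊗ₜ m)) = σ.asAlgebraHom a (f m) :=
  rfl

lemma indLift_indRep (h : H) (x : IndV ι ρ) :
    indLift σ f hf (indRep ι ρ h x) = σ h (indLift σ f hf x) := by
  have : indLift σ f hf ∘ₗ indRep ι ρ h = σ h ∘ₗ indLift σ f hf := by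
    refine Submodule.linearMap_qext _ (TensorProduct.ext' fun a m => ?_)
    simp [indRep_mk_tmul, indLift_mk_tmul]
  exact LinearMap.congr_fun this x

lemma span_mk_single_tmul_eq_top {X : Type} (s : X → H) (hs : ∀ h, ∃ x k, h = s x * ι k) :
    Submodule.span ℂ (Set.range fun p : X × M =>
      (Submodule.Quotient.mk (single (s p.1) 1 ⊗ₜ p.2) : IndV ι ρ)) = ⊤ := by
  rw [eq_top_iff]
  rintro y -
  obtain ⟨y, rfl⟩ := Submodule.Quotient.mk_surjective _ y
  induction y using TensorProduct.induction_on with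
  | zero => exact zero_mem _
  | add y z hy hz => exact add_mem hy hz
  | tmul a m =>
    induction a using MonoidAlgebra.induction_linear with
    | zero => simp
    | add a b ha hb => rw [TensorProduct.add_tmul]; exact add_mem ha hb
    | single h c =>
      obtain ⟨x, k, rfl⟩ := hs h
      have : single (s x * ι k) c ⊗ₜ m = c • ((single (s x) 1 * single (ι k) 1) ⊗ₜ[ℂ] m) := by
        rw [single_mul_single, one_mul, TensorProduct.smul_tmul', smul_single', mul_one]
      rw [this, Submodule.Quotient.mk_smul, mk_mul_single_tmul]
      exact Submodule.smul_mem _ _ (Submodule.subset_span ⟨(x, ρ k m), rfl⟩)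

end InducedLift

section Wreath

variable {G : Type} [Group G]

lemma pairHom_apply_left {k n : ℕ} (hk : k ≤ n) (p : Wreath G k × Wreath G (n - k)) (i : Fin n) :
    (pairHom G hk p).left i = Sum.elim p.1.left p.2.left ((finSumEquiv hk).symm i) :=
  rfl

lemma pairHom_apply_right {k n : ℕ} (hk : k ≤ n) (p : Wreath G k × Wreath G (n - k)) :
    (pairHom G hk p).right = (finSumEquiv hk).permCongr (Equiv.sumCongr p.1.right p.2.right) :=
  rfl

lemma gHom_surjective : Function.Surjective (gHom G) := fun w =>
  ⟨w.left 0, SemidirectProduct.ext (funext fun i => by rw [Subsingleton.elim i 0]; rfl)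
    (Subsingleton.elim _ _)⟩

lemma mem_range_pairHom {k n : ℕ} (hk : k ≤ n) {u : Wreath G n}
    (hu : Set.MapsTo u.right (Set.range (finSumEquiv hk ∘ Sum.inl))
      (Set.range (finSumEquiv hk ∘ Sum.inl))) :
    u ∈ (pairHom G hk).range := by
  set e := finSumEquiv hk
  have hτ : Set.MapsTo (e.symm.permCongr u.right) (Set.range Sum.inl) (Set.range Sum.inl) := by
    rintro _ ⟨j, rfl⟩
    obtain ⟨j', hj'⟩ := hu ⟨j, rfl⟩
    exact ⟨j', e.eq_symm_apply.2 hj'⟩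
  obtain ⟨⟨σ₁, σ₂⟩, hσ⟩ := Equiv.Perm.mem_sumCongrHom_range_of_perm_mapsTo_inl hτ
  refine ⟨(⟨fun j => u.left (e (.inl j)), σ₁⟩, ⟨fun j => u.left (e (.inr j)), σ₂⟩), ?_⟩
  refine SemidirectProduct.ext (funext fun i => ?_) ?_
  · rw [pairHom_apply_left]
    obtain ⟨j | j, rfl⟩ := e.surjective i <;> simp [e]
  · rw [pairHom_apply_right]
    change e.permCongr (Equiv.Perm.sumCongrHom _ _ (σ₁, σ₂)) = _
    rw [hσ]
    ext i
    simp [Equiv.permCongr_apply]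

variable {n : ℕ} (hn : 1 ≤ n)

def pivot : Fin n := finSumEquiv hn (.inl 0)

variable (G) in
abbrev stabEmb : G × Wreath G (n - 1) →* Wreath G n :=
  (pairHom G hn).comp ((gHom G).prodMap (MonoidHom.id (Wreath G (n - 1))))

lemma stabEmb_apply_right_pivot (k : G × Wreath G (n - 1)) :
    (stabEmb G hn k).right (pivot hn) = pivot hn := by
  simp [pairHom_apply_right, pivot, Equiv.permCongr_apply, gHom]

lemma stabEmb_apply_left_pivot (k : G × Wreath G (n - 1)) :
    (stabEmb G hn k).left (pivot hn) = k.1 := by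
  simp [pairHom_apply_left, pivot, gHom]

lemma mem_range_stabEmb {u : Wreath G n} (hu : u.right (pivot hn) = pivot hn) :
    u ∈ (stabEmb G hn).range := by
  obtain ⟨p, rfl⟩ := mem_range_pairHom hn (u := u) <| by
    rintro _ ⟨j, rfl⟩
    exact ⟨0, by rw [Subsingleton.elim j 0]; exact hu.symm⟩
  obtain ⟨g, hg⟩ := gHom_surjective p.1
  exact ⟨(g, p.2), by simp [hg]⟩

def cosetRep (i : Fin n) : Wreath G n := ⟨1, Equiv.swap (pivot hn) i⟩

lemma exists_eq_cosetRep_mul_stabEmb (h : Wreath G n) :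
    ∃ i k, h = cosetRep hn i * stabEmb G hn k := by
  have hfix : ((cosetRep hn (h.right (pivot hn)))⁻¹ * h).right (pivot hn) = pivot hn := by
    simp [cosetRep]
  obtain ⟨k, hk⟩ := mem_range_stabEmb hn hfix
  exact ⟨_, k, by rw [hk, mul_inv_cancel_left]⟩

variable (χ : G →* ℂˣ)

lemma monomialRep_single (w : Wreath G n) (i : Fin n) (c : ℂ) :
    monomialRep n χ w (Pi.single i c) = Pi.single (w.right i) (χ (w.left (w.right i)) * c) := by
  ext j
  obtain ⟨j, rfl⟩ := w.right.surjective j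
  simp only [monomialRep, Pi.single_apply]
  split_ifs with hj <;> simp_all

def monomialLift : IndV (stabEmb G hn) (chiBoxOne n χ) →ₗ[ℂ] (Fin n → ℂ) :=
  indLift (monomialRep n χ) (LinearMap.single ℂ (fun _ => ℂ) (pivot hn)) fun k m => by
    rw [LinearMap.coe_single, monomialRep_single, stabEmb_apply_right_pivot,
      stabEmb_apply_left_pivot]
    rfl

def cosetVec (i : Fin n) : IndV (stabEmb G hn) (chiBoxOne n χ) :=
  Submodule.Quotient.mk (MonoidAlgebra.single (cosetRep hn i) 1 ⊗ₜ 1)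

lemma monomialLift_cosetVec (i : Fin n) : monomialLift hn χ (cosetVec hn χ i) = Pi.single i 1 := by
  simp [monomialLift, cosetVec, indLift_mk_tmul, monomialRep_single, cosetRep]

lemma span_cosetVec_eq_top : Submodule.span ℂ (Set.range (cosetVec hn χ)) = ⊤ := by
  refine eq_top_iff.2 <| (span_mk_single_tmul_eq_top _ (exists_eq_cosetRep_mul_stabEmb hn)).ge.trans
    (Submodule.span_le.2 ?_)
  rintro _ ⟨⟨i, m⟩, rfl⟩
  have : MonoidAlgebra.single (cosetRep hn i) 1 ⊗ₜ m =
      m • (MonoidAlgebra.single (cosetRep hn i : Wreath G n) (1 : ℂ) ⊗ₜ[ℂ] (1 : ℂ)) := by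
    rw [← TensorProduct.tmul_smul, smul_eq_mul, mul_one]
  simp only [this, Submodule.Quotient.mk_smul]
  exact Submodule.smul_mem _ m (Submodule.subset_span ⟨i, rfl⟩)

end Wreath

theorem monomialRep_iso_induced_general
    (G : Type) [CommGroup G] (χ : G →* ℂˣ) (n : ℕ) (hn : 1 ≤ n) :
    ∃ e : IndV ((pairHom G hn).comp ((gHom G).prodMap (MonoidHom.id (Wreath G (n - 1)))))
          (chiBoxOne n χ) ≃ₗ[ℂ] (Fin n → ℂ),
      ∀ (w : Wreath G n) (x : IndV
          ((pairHom G hn).comp ((gHom G).prodMap (MonoidHom.id (Wreath G (n - 1)))))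
          (chiBoxOne n χ)),
        e (indRep ((pairHom G hn).comp ((gHom G).prodMap (MonoidHom.id (Wreath G (n - 1)))))
            (chiBoxOne n χ) w x)
          = monomialRep n χ w (e x) := by
  set φ := monomialLift hn χ
  set ψ := Fintype.linearCombination ℂ (cosetVec hn χ)
  have hφψ : φ ∘ₗ ψ = LinearMap.id := LinearMap.pi_ext fun i c => by
    simp [φ, ψ, Fintype.linearCombination_apply_single, monomialLift_cosetVec, ← Pi.single_smul]
  have hψ : Function.Surjective ψ := by
    rw [← LinearMap.range_eq_top, Fintype.range_linearCombination, span_cosetVec_eq_top]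
  have hψφ : ψ ∘ₗ φ = LinearMap.id :=
    LinearMap.ext <| Function.LeftInverse.rightInverse_of_surjective (f := φ)
      (LinearMap.congr_fun hφψ) hψ
  exact ⟨.ofLinearMap φ ψ hφψ hψφ, fun w x => (indLift_indRep w x : φ _ = _)⟩

/-- For a character `χ` of a finite abelian group `G` and `n ≥ 1`, the monomial
representation `V_χ` of `G ≀ Sₙ` on `ℂⁿ` is isomorphic, as a representation of `G ≀ Sₙ`,
to the induced representation `Ind_{G × (G ≀ S_{n-1})}^{G ≀ Sₙ} (χ ⊠ 1)`, where
`G × (G ≀ S_{n-1})` sits inside `G ≀ Sₙ` via `Fin 1 ⊕ Fin (n-1) ≃ Fin n`. -/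
theorem monomialRep_iso_induced
    (G : Type) [CommGroup G] [Fintype G] (χ : G →* ℂˣ) (n : ℕ) (hn : 1 ≤ n) :
    ∃ e : IndV ((pairHom G hn).comp ((gHom G).prodMap (MonoidHom.id (Wreath G (n - 1)))))
          (chiBoxOne n χ) ≃ₗ[ℂ] (Fin n → ℂ),
      ∀ (w : Wreath G n) (x : IndV
          ((pairHom G hn).comp ((gHom G).prodMap (MonoidHom.id (Wreath G (n - 1)))))
          (chiBoxOne n χ)),
        e (indRep ((pairHom G hn).comp ((gHom G).prodMap (MonoidHom.id (Wreath G (n - 1)))))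
            (chiBoxOne n χ) w x)
          = monomialRep n χ w (e x) :=
  monomialRep_iso_induced_general G χ n hn
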